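/- arXiv:1502.07380 — 4 statements merged into one kernel-verified Lean document; each statement's English description precedes it below -/
import Mathlib

section
/- Composition of wiring diagrams is associative: given wiring diagrams φ : X → Y, ψ : Y → Z, and χ : Z → W defined by pairs of typed functions (φ_in : X_in → Y_in ⊔ X_out, φ_out : Y_out → X_out) with the stated composition formula, we have χ ∘ (ψ ∘ φ) = (χ ∘ ψ) ∘ φ. -/
/-- A typed finite set: a finite set together with a typing function to `Type`. -/
structure TFS where
  carrier : Type
  fintype : Fintype carrier
  typ : carrier → Type

/-- A typed function between typed finite sets. -/
def TFS.hom (A B : TFS) : Type :=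
  {q : A.carrier → B.carrier // ∀ a, B.typ (q a) = A.typ a}

/-- Disjoint union of typed finite sets. -/
def TFS.sum (A B : TFS) : TFS :=
  letI := A.fintype; letI := B.fintype
  ⟨A.carrier ⊕ B.carrier, inferInstance, Sum.elim A.typ B.typ⟩

/-- The empty typed finite set `(∅, !)`. -/
def TFS.empty : TFS :=
  ⟨PEmpty, inferInstance, fun x => PEmpty.elim x⟩

namespace TFS.hom

def id (A : TFS) : TFS.hom A A := ⟨fun a => a, fun _ => rfl⟩

def comp {A B C : TFS} (g : TFS.hom B C) (f : TFS.hom A B) : TFS.hom A C :=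
  ⟨fun a => g.1 (f.1 a), fun a => (g.2 (f.1 a)).trans (f.2 a)⟩

def sumMap {A B C D : TFS} (f : TFS.hom A B) (g : TFS.hom C D) :
    TFS.hom (A.sum C) (B.sum D) :=
  ⟨Sum.map f.1 g.1, by
    rintro (a | c)
    · exact f.2 a
    · exact g.2 c⟩

def fold {A B : TFS} : TFS.hom ((A.sum B).sum B) (A.sum B) :=
  ⟨Sum.elim (fun x => x) Sum.inr, by rintro ((a | b) | b) <;> rfl⟩

def inl {A B : TFS} : TFS.hom A (A.sum B) := ⟨Sum.inl, fun _ => rfl⟩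

def inr {A B : TFS} : TFS.hom B (A.sum B) := ⟨Sum.inr, fun _ => rfl⟩

def shuffle {A B C D : TFS} :
    TFS.hom ((A.sum B).sum (C.sum D)) ((A.sum C).sum (B.sum D)) :=
  ⟨fun x => match x with
    | .inl (.inl a) => .inl (.inl a)
    | .inl (.inr b) => .inr (.inl b)
    | .inr (.inl c) => .inl (.inr c)
    | .inr (.inr d) => .inr (.inr d),
   by rintro ((a | b) | (c | d)) <;> rfl⟩

def assocHom {A B C : TFS} : TFS.hom ((A.sum B).sum C) (A.sum (B.sum C)) :=
  ⟨fun x => match x with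
    | .inl (.inl a) => .inl a
    | .inl (.inr b) => .inr (.inl b)
    | .inr c => .inr (.inr c),
   by rintro ((a | b) | c) <;> rfl⟩

def assocInvHom {A B C : TFS} : TFS.hom (A.sum (B.sum C)) ((A.sum B).sum C) :=
  ⟨fun x => match x with
    | .inl a => .inl (.inl a)
    | .inr (.inl b) => .inl (.inr b)
    | .inr (.inr c) => .inr c,
   by rintro (a | (b | c)) <;> rfl⟩

end TFS.hom

/-- The dependent product `Ā = ∏_{a ∈ A} τ(a)` of a typed finite set. -/
def TFS.prod (A : TFS) : Type := (a : A.carrier) → A.typ a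

/-- The contravariant action of a typed function on dependent products. -/
def TFS.hom.prodMap {A B : TFS} (q : TFS.hom A B) (f : B.prod) : A.prod :=
  fun a => cast (q.2 a) (f (q.1 a))

def TFS.pair {A B : TFS} (f : A.prod) (g : B.prod) : (A.sum B).prod :=
  fun x => match x with
  | .inl a => f a
  | .inr b => g b

def TFS.fst {A B : TFS} (f : (A.sum B).prod) : A.prod := fun a => f (Sum.inl a)

def TFS.snd {A B : TFS} (f : (A.sum B).prod) : B.prod := fun b => f (Sum.inr b)

/-- A box: a pair of typed finite sets of input and output ports. -/
structure Box where
  inp : TFS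
  out : TFS

/-- Disjoint union of boxes. -/
def Box.tensor (X Y : Box) : Box := ⟨X.inp.sum Y.inp, X.out.sum Y.out⟩

/-- The empty box `(∅, ∅)`. -/
def Box.unit : Box := ⟨TFS.empty, TFS.empty⟩

/-- A wiring diagram `φ : X → Y`. -/
structure WD (X Y : Box) where
  win : TFS.hom X.inp (Y.inp.sum X.out)
  wout : TFS.hom Y.out X.out

/-- The identity wiring diagram. -/
def WD.id (X : Box) : WD X X := ⟨TFS.hom.inl, TFS.hom.id X.out⟩

/-- Composition of wiring diagrams: `WD.comp ψ φ` is `ψ ∘ φ`. -/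
def WD.comp {X Y Z : Box} (ψ : WD Y Z) (φ : WD X Y) : WD X Z where
  win := TFS.hom.fold.comp
    ((((TFS.hom.id Z.inp).sumMap φ.wout).sumMap (TFS.hom.id X.out)).comp
      ((ψ.win.sumMap (TFS.hom.id X.out)).comp φ.win))
  wout := φ.wout.comp ψ.wout

/-- Disjoint union of wiring diagrams. -/
def WD.tensor {X X' Y Y' : Box} (φ : WD X Y) (φ' : WD X' Y') :
    WD (X.tensor X') (Y.tensor Y') where
  win := TFS.hom.shuffle.comp (φ.win.sumMap φ'.win)
  wout := φ.wout.sumMap φ'.wout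

/-- A modal box: a mode set together with an interface function. -/
structure ModalBox where
  mode : Type
  box : mode → Box

/-- A mode-dependent network `(ε, σ) : (M, X) → (N, Y)`; the typing of `ε`
encodes `dom (ε m) = X m` and `cod (ε m) = Y (σ m)`. -/
structure MDNHom (A B : ModalBox) where
  σ : A.mode → B.mode
  ε : (m : A.mode) → WD (A.box m) (B.box (σ m))

def MDNId (A : ModalBox) : MDNHom A A := ⟨fun m => m, fun m => WD.id (A.box m)⟩

/-- `MDNComp g f` is the composite `g ∘ f` in MDN. -/
def MDNComp {A B C : ModalBox} (g : MDNHom B C) (f : MDNHom A B) : MDNHom A C :=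
  ⟨fun m => g.σ (f.σ m), fun m => WD.comp (g.ε (f.σ m)) (f.ε m)⟩

/-- Monoidal product of modal boxes. -/
def ModalBox.tensor (A B : ModalBox) : ModalBox :=
  ⟨A.mode × B.mode, fun p => (A.box p.1).tensor (B.box p.2)⟩

/-- The monoidal unit `({∗}, ∅)` of MDN. -/
def ModalBox.unit : ModalBox := ⟨PUnit, fun _ => Box.unit⟩

/-- Monoidal product of mode-dependent networks. -/
def MDNTensorHom {A A' B B' : ModalBox} (f : MDNHom A A') (g : MDNHom B B') :
    MDNHom (A.tensor B) (A'.tensor B') :=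
  ⟨fun p => (f.σ p.1, g.σ p.2), fun p => (f.ε p.1).tensor (g.ε p.2)⟩

/-- A modal dynamical system on a modal box. -/
structure MDS (A : ModalBox) where
  S : Type
  q : S → A.mode
  fIn : (s : S) → (A.box (q s)).inp.prod → S
  fOut : (s : S) → (A.box (q s)).out.prod

/-- The action of `P` on a morphism of MDN. -/
def MDS.map {A B : ModalBox} (h : MDNHom A B) (D : MDS A) : MDS B where
  S := D.S
  q := fun s => h.σ (D.q s)
  fIn := fun s y => D.fIn s ((h.ε (D.q s)).win.prodMap (TFS.pair y (D.fOut s)))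
  fOut := fun s => (h.ε (D.q s)).wout.prodMap (D.fOut s)


/-!
The typing conditions on a wiring diagram are propositions, so two wiring diagrams agree as
soon as their underlying functions do. On underlying functions the inner wiring of `ψ ∘ φ` is
`a ↦ Sum.elim (Sum.map id φ_out ∘ ψ_in) inr (φ_in a)`, and associativity of this operation is a
case split on whether a port is wired to an input of the outer box or back to an output.
-/

def wiringComp {A A' B B' C : Type*} (ψin : B → C ⊕ B') (φout : B' → A') (φin : A → B ⊕ A') :
    A → C ⊕ A' :=
  fun a => Sum.elim (fun b => (ψin b).map id φout) Sum.inr (φin a)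

theorem wiringComp_assoc {A A' B B' C C' D : Type*} (φin : A → B ⊕ A') (φout : B' → A')
    (ψin : B → C ⊕ B') (ψout : C' → B') (χin : C → D ⊕ C') :
    wiringComp χin (φout ∘ ψout) (wiringComp ψin φout φin) =
      wiringComp (wiringComp χin ψout ψin) φout φin := by
  funext a
  simp only [wiringComp]
  rcases φin a with b | a'
  · simp only [Sum.elim_inl]
    rcases ψin b with c | b' <;> simp [Sum.map_map]
  · rfl

theorem WD.ext_val {X Y : Box} {φ φ' : WD X Y} (hin : φ.win.1 = φ'.win.1)
    (hout : φ.wout.1 = φ'.wout.1) : φ = φ' := by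
  obtain ⟨⟨fin, _⟩, ⟨fout, _⟩⟩ := φ
  obtain ⟨⟨fin', _⟩, ⟨fout', _⟩⟩ := φ'
  subst hin hout
  rfl

theorem WD.comp_win_val {X Y Z : Box} (ψ : WD Y Z) (φ : WD X Y) :
    (ψ.comp φ).win.1 = wiringComp ψ.win.1 φ.wout.1 φ.win.1 := by
  funext a
  simp only [WD.comp, TFS.hom.comp, TFS.hom.fold, TFS.hom.sumMap, wiringComp]
  rcases φ.win.1 a with y | x <;> rfl

/-- Composition of wiring diagrams is associative. -/
theorem wd_comp_assoc {X Y Z W : Box} (φ : WD X Y) (ψ : WD Y Z) (χ : WD Z W) :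
    WD.comp χ (WD.comp ψ φ) = WD.comp (WD.comp χ ψ) φ := by
  refine WD.ext_val ?_ rfl
  simp only [WD.comp_win_val]
  exact wiringComp_assoc φ.win.1 φ.wout.1 ψ.win.1 ψ.wout.1 χ.win.1
end

section
/- Mode-dependent networks form a category MDN: objects are pairs (M, X) with M a set and X : M → Ob(WD); morphisms (M,X) → (N,Y) are pairs (ε, σ) with σ : M → N and ε : M → Mor(WD) satisfying dom(ε(m)) = X(m) and cod(ε(m)) = Y(σ(m)); composition (ε₁,σ₁) ∘ (ε₀,σ₀) = (m ↦ ε₁(σ₀(m)) ∘_WD ε₀(m), σ₁ ∘ σ₀) is associative and unital, with identity (m ↦ id_{X(m)}, id_M). -/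
/-!
Composition in MDN composes the wiring diagrams `ε` pointwise along `σ`, so the category laws of
MDN are those of WD. In WD the output wiring `wout` composes as plain functions, while the input
wiring composes as a Kleisli-style composite for `· ⊕ out` twisted by `wout`; its associativity
is a case split on where a port is routed.
-/

theorem Sum.elim_map_comp_elim_map {B C D O₁ O₂ O₃ : Type*} (ψ : B → C ⊕ O₂) (χ : C → D ⊕ O₃)
    (g : O₂ → O₁) (h : O₃ → O₂) :
    Sum.elim (Sum.map id (g ∘ h) ∘ χ) Sum.inr ∘ Sum.elim (Sum.map id g ∘ ψ) Sum.inr =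
      Sum.elim (Sum.map id g ∘ Sum.elim (Sum.map id h ∘ χ) Sum.inr ∘ ψ) Sum.inr := by
  funext x
  rcases x with b | o
  · simp only [Function.comp_apply, Sum.elim_inl]
    rcases ψ b with c | o
    · simp only [Sum.map_inl, Sum.elim_inl, Function.comp_apply, id]
      rcases χ c with d | o <;> rfl
    · rfl
  · rfl

namespace WD

theorem comp_win_val_s6 {X Y Z : Box} (ψ : WD Y Z) (φ : WD X Y) :
    (ψ.comp φ).win.1 = Sum.elim (Sum.map _root_.id φ.wout.1 ∘ ψ.win.1) Sum.inr ∘ φ.win.1 := by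
  funext x
  dsimp only [WD.comp, TFS.hom.comp, TFS.hom.sumMap, TFS.hom.fold, TFS.hom.id, Function.comp]
  rcases φ.win.1 x with y | o
  · rcases ψ.win.1 y with z | o <;> rfl
  · rfl

@[ext]
theorem ext {X Y : Box} {φ ψ : WD X Y} (hin : φ.win.1 = ψ.win.1) (hout : φ.wout = ψ.wout) :
    φ = ψ := by
  obtain ⟨⟨_, _⟩, _⟩ := φ
  obtain ⟨⟨_, _⟩, _⟩ := ψ
  cases hin
  cases hout
  rfl

theorem id_comp {X Y : Box} (φ : WD X Y) : (WD.id Y).comp φ = φ := by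
  ext1
  · rw [comp_win_val_s6]
    exact congrArg (· ∘ φ.win.1) Sum.elim_inl_inr
  · rfl

theorem comp_id {X Y : Box} (φ : WD X Y) : φ.comp (WD.id X) = φ := by
  ext1
  · rw [comp_win_val_s6]
    exact congrArg (· ∘ φ.win.1) Sum.map_id_id
  · rfl

theorem comp_assoc {W X Y Z : Box} (χ : WD Y Z) (ψ : WD X Y) (φ : WD W X) :
    χ.comp (ψ.comp φ) = (χ.comp ψ).comp φ := by
  ext1
  · rw [comp_win_val_s6, comp_win_val_s6, comp_win_val_s6, comp_win_val_s6]
    exact congrArg (· ∘ φ.win.1) (Sum.elim_map_comp_elim_map ψ.win.1 χ.win.1 φ.wout.1 ψ.wout.1)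
  · rfl

end WD

theorem MDNComp_assoc {A B C D : ModalBox} (h : MDNHom C D) (g : MDNHom B C) (f : MDNHom A B) :
    MDNComp h (MDNComp g f) = MDNComp (MDNComp h g) f :=
  congrArg (MDNHom.mk _) (funext fun _ => WD.comp_assoc _ _ _)

theorem MDNComp_id {A B : ModalBox} (f : MDNHom A B) : MDNComp f (MDNId A) = f :=
  congrArg (MDNHom.mk f.σ) (funext fun m => WD.comp_id (f.ε m))

theorem MDNId_comp {A B : ModalBox} (f : MDNHom A B) : MDNComp (MDNId B) f = f :=
  congrArg (MDNHom.mk f.σ) (funext fun m => WD.id_comp (f.ε m))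

/-- mode-dependent networks form a category MDN: composition is
associative and unital with the indicated identities. -/
theorem mdn_category :
    (∀ (A B C D : ModalBox) (f : MDNHom A B) (g : MDNHom B C) (h : MDNHom C D),
      MDNComp h (MDNComp g f) = MDNComp (MDNComp h g) f) ∧
    (∀ (A B : ModalBox) (f : MDNHom A B), MDNComp f (MDNId A) = f) ∧
    (∀ (A B : ModalBox) (f : MDNHom A B), MDNComp (MDNId B) f = f) :=
  ⟨fun _ _ _ _ f g h => MDNComp_assoc h g f, fun _ _ => MDNComp_id, fun _ _ => MDNId_comp⟩
end

section
/- There is a strong monoidal functor I : WD → MDN given on objects by I(X) = ({∗}, X) and on morphisms by sending φ : X → Y to (ε_φ, id_{∗}) where ε_φ(∗) = φ. In particular, I preserves identities and composition, and I(X ⊔ Y) ≅ I(X) ⊗ I(Y). -/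
/-- The functor `I : WD → MDN` on objects. -/
def IObj (X : Box) : ModalBox := ⟨PUnit, fun _ => X⟩

/-- The functor `I : WD → MDN` on morphisms. -/
def IHom {X Y : Box} (φ : WD X Y) : MDNHom (IObj X) (IObj Y) :=
  ⟨fun _ => PUnit.unit, fun _ => φ⟩

theorem WD.id_comp_s8 {X Y : Box} (φ : WD X Y) : WD.comp (WD.id Y) φ = φ := by
  obtain ⟨⟨win, hwin⟩, wout⟩ := φ
  show WD.mk _ _ = WD.mk _ _
  congr 1
  refine Subtype.ext (funext fun x => ?_)
  show Sum.elim _ _ (Sum.map _ _ (Sum.map _ _ (win x))) = win x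
  cases win x <;> rfl

/-- `IObj X` is definitionally `ModalBox.const PUnit X`, and `IObj X ⊗ IObj Y` is
`ModalBox.const (PUnit × PUnit) (X.tensor Y)`. -/
def ModalBox.const (M : Type) (X : Box) : ModalBox := ⟨M, fun _ => X⟩

namespace MDNHom

variable {M N P : Type} {X Y : Box}

/-- Between constant modal boxes the type of `ε` does not depend on `σ`. -/
theorem ext_const {f g : MDNHom (ModalBox.const M X) (ModalBox.const N Y)}
    (hσ : f.σ = g.σ) (hε : f.ε = g.ε) : f = g := by
  cases f; cases g
  cases hσ
  cases hε
  rfl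

def ofFun (f : M → N) (X : Box) : MDNHom (ModalBox.const M X) (ModalBox.const N X) :=
  ⟨f, fun _ => WD.id X⟩

theorem comp_ofFun (g : N → P) (f : M → N) :
    MDNComp (ofFun g X) (ofFun f X) = ofFun (g ∘ f) X :=
  ext_const rfl (funext fun _ => WD.id_comp_s8 _)

theorem ofFun_id : ofFun id X = MDNId (ModalBox.const M X) := rfl

end MDNHom

theorem ModalBox.const_iso_of_equiv {M N : Type} (e : M ≃ N) (X : Box) :
    ∃ (u : MDNHom (ModalBox.const M X) (ModalBox.const N X))
      (v : MDNHom (ModalBox.const N X) (ModalBox.const M X)),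
      MDNComp v u = MDNId _ ∧ MDNComp u v = MDNId _ := by
  refine ⟨.ofFun e X, .ofFun e.symm X, ?_, ?_⟩
  · rw [MDNHom.comp_ofFun, e.symm_comp_self, MDNHom.ofFun_id]
  · rw [MDNHom.comp_ofFun, e.self_comp_symm, MDNHom.ofFun_id]

/-- `I : WD → MDN` is a strong monoidal functor: it preserves
identities and composition, sends the unit to the unit, and
`I(X ⊔ Y) ≅ I(X) ⊗ I(Y)`. -/
theorem I_strong_monoidal :
    (∀ X : Box, IHom (WD.id X) = MDNId (IObj X)) ∧
    (∀ (X Y Z : Box) (φ : WD X Y) (ψ : WD Y Z),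
      IHom (WD.comp ψ φ) = MDNComp (IHom ψ) (IHom φ)) ∧
    (IObj Box.unit = ModalBox.unit) ∧
    (∀ X Y : Box,
      ∃ (u : MDNHom (IObj (X.tensor Y)) ((IObj X).tensor (IObj Y)))
        (v : MDNHom ((IObj X).tensor (IObj Y)) (IObj (X.tensor Y))),
        MDNComp v u = MDNId (IObj (X.tensor Y)) ∧
        MDNComp u v = MDNId ((IObj X).tensor (IObj Y))) :=
  ⟨fun _ => rfl, fun _ _ _ _ _ => rfl, rfl,
    fun X Y => ModalBox.const_iso_of_equiv (Equiv.prodPUnit PUnit).symm (X.tensor Y)⟩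
end

section
/- The assignment P on a modal box (M, X), defined as the set of 4-tuples (S, q, f_in, f_out) with S a set, q : S → M, f_in(s) : X_in‾(q(s)) → S for each s ∈ S, and f_out(s) ∈ X_out‾(q(s)), together with the action on morphisms P(ε,σ)(S,q,f) = (S, σ∘q, g) defined by g_out(s) = ε_out‾(q(s))(f_out(s)) and g_in(s)(y) = f_in(s)(ε_in‾(q(s))(y, f_out(s))), is functorial: P((ε₁,σ₁) ∘ (ε₀,σ₀)) = P(ε₁,σ₁) ∘ P(ε₀,σ₀). -/
namespace TFS.hom

theorem prodMap_id {A : TFS} (x : A.prod) : (TFS.hom.id A).prodMap x = x :=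
  rfl

theorem prodMap_comp {A B C : TFS} (g : TFS.hom B C) (f : TFS.hom A B) (x : C.prod) :
    (g.comp f).prodMap x = f.prodMap (g.prodMap x) := by
  funext a
  simp only [comp, prodMap, cast_cast]

theorem prodMap_sumMap_pair {A B C D : TFS} (f : TFS.hom A B) (g : TFS.hom C D)
    (u : B.prod) (v : D.prod) :
    (f.sumMap g).prodMap (TFS.pair u v) = TFS.pair (f.prodMap u) (g.prodMap v) := by
  funext x
  rcases x with a | c <;> rfl

theorem prodMap_fold_pair {A B : TFS} (u : A.prod) (v : B.prod) :
    fold.prodMap (TFS.pair u v) = TFS.pair (TFS.pair u v) v := by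
  funext x
  rcases x with (a | b) | b <;> rfl

end TFS.hom

namespace WD

open TFS.hom

theorem comp_wout_prodMap {X Y Z : Box} (ψ : WD Y Z) (φ : WD X Y) (x : X.out.prod) :
    (ψ.comp φ).wout.prodMap x = ψ.wout.prodMap (φ.wout.prodMap x) :=
  prodMap_comp _ _ _

theorem comp_win_prodMap_pair {X Y Z : Box} (ψ : WD Y Z) (φ : WD X Y) (z : Z.inp.prod)
    (x : X.out.prod) :
    (ψ.comp φ).win.prodMap (TFS.pair z x) =
      φ.win.prodMap (TFS.pair (ψ.win.prodMap (TFS.pair z (φ.wout.prodMap x))) x) := by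
  simp only [comp, prodMap_comp, prodMap_fold_pair, prodMap_sumMap_pair, prodMap_id]

end WD

/-- `P` is functorial:
`P((ε₁,σ₁) ∘ (ε₀,σ₀)) = P(ε₁,σ₁) ∘ P(ε₀,σ₀)`. -/
theorem P_functorial {A B C : ModalBox} (f : MDNHom A B) (g : MDNHom B C)
    (D : MDS A) : MDS.map (MDNComp g f) D = MDS.map g (MDS.map f D) := by
  simp only [MDS.map, MDNComp, WD.comp_win_prodMap_pair, WD.comp_wout_prodMap]
end
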